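/- Let X' ⊆ X be an open subspace. Then the map Φ : 𝒮_X → 𝒮_{X'} sending a closed lower subset S of X to S ∩ X' is continuous, where each space carries the topology generated by the sets V_U and V^x. -/

import Mathlib

open Set TopologicalSpace

/-- `H` is a lower set with respect to the strict order: `x ∈ H` and `y < x` imply `y ∈ H`. -/
def IsLowerLt {X : Type*} [LT X] (H : Set X) : Prop :=
  ∀ ⦃x⦄, x ∈ H → ∀ ⦃y⦄, y < x → y ∈ H


/-- The space `𝒮_Y` of topologically closed lower subsets of `Y`. -/
def SSpace (Y : Type*) [TopologicalSpace Y] [LT Y] : Type _ :=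
  {S : Set Y // IsClosed S ∧ IsLowerLt S}

/-- The topology on `𝒮_Y` generated by the sets `V_U = {S : S ∩ U ≠ ∅}` for `U` open and
`V^x = {S : x ∉ S}` for `x ∈ Y`. -/
def STopologyPt (Y : Type*) [TopologicalSpace Y] [LT Y] : TopologicalSpace (SSpace Y) :=
  TopologicalSpace.generateFrom
    ({W | ∃ U : Set Y, IsOpen U ∧ W = {S : SSpace Y | (S.1 ∩ U).Nonempty}} ∪
     {W | ∃ x : Y, W = {S : SSpace Y | x ∉ S.1}})

namespace SSpace

variable {X Y : Type*} [TopologicalSpace X] [TopologicalSpace Y] [LT X] [LT Y]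

def comap (f : Y → X) (hf : Continuous f) (hlt : ∀ ⦃a b : Y⦄, a < b → f a < f b) :
    SSpace X → SSpace Y :=
  fun S => ⟨f ⁻¹' S.1, S.2.1.preimage hf, fun _ hx _ hy => S.2.2 hx (hlt hy)⟩

variable {f : Y → X} {hf : Continuous f} {hlt : ∀ ⦃a b : Y⦄, a < b → f a < f b}

theorem comap_preimage_inter_nonempty (V : Set X) :
    comap f hf hlt ⁻¹' {T | (T.1 ∩ f ⁻¹' V).Nonempty} =
      {S | (S.1 ∩ (V ∩ range f)).Nonempty} := by
  ext S
  constructor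
  · rintro ⟨y, hyS, hyV⟩
    exact ⟨f y, hyS, hyV, y, rfl⟩
  · rintro ⟨_, hxS, hxV, y, rfl⟩
    exact ⟨y, hxS, hxV⟩

theorem continuous_comap (he : Topology.IsOpenEmbedding f) :
    @Continuous _ _ (STopologyPt X) (STopologyPt Y) (comap f he.continuous hlt) := by
  refine continuous_generateFrom_iff.2 fun W hW => ?_
  rcases hW with ⟨U, hU, rfl⟩ | ⟨y, rfl⟩
  · obtain ⟨V, hV, rfl⟩ := he.isInducing.isOpen_iff.1 hU
    rw [comap_preimage_inter_nonempty]
    exact isOpen_generateFrom_of_mem (Or.inl ⟨_, hV.inter he.isOpen_range, rfl⟩)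
  · exact isOpen_generateFrom_of_mem (Or.inr ⟨f y, rfl⟩)

end SSpace

theorem restriction_continuous_general (X : Type*) [TopologicalSpace X] [PartialOrder X]
    (X' : Set X) (hX' : IsOpen X') :
    @Continuous (SSpace X) (SSpace X') (STopologyPt X) (STopologyPt X')
      (fun S => ⟨Subtype.val ⁻¹' S.1,
        S.2.1.preimage continuous_subtype_val,
        fun x hx y hy => S.2.2 hx (Subtype.coe_lt_coe.2 hy)⟩) :=
  SSpace.continuous_comap (hlt := fun _ _ => Subtype.coe_lt_coe.2) hX'.isOpenEmbedding_subtypeVal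

/-- For `X' ⊆ X` open, the restriction map `S ↦ S ∩ X'` from `𝒮_X` to `𝒮_{X'}`
is continuous. -/
theorem restriction_continuous (X : Type*) [TopologicalSpace X] [PartialOrder X]
    (hR : IsOpen {p : X × X | p.1 < p.2})
    (hsb : ∀ x : X, x ∈ closure {y | y < x})
    (X' : Set X) (hX' : IsOpen X') :
    @Continuous (SSpace X) (SSpace X') (STopologyPt X) (STopologyPt X')
      (fun S => ⟨Subtype.val ⁻¹' S.1,
        S.2.1.preimage continuous_subtype_val,
        fun x hx y hy => S.2.2 hx (Subtype.coe_lt_coe.2 hy)⟩) :=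
  restriction_continuous_general X X' hX'
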